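/- Let f_β(b₁, b₂, b₁₂) = Prob_β(b₁, b₂, b₁₂) - β·(3 - b₁ - b₂ - b₁₂)/4, where Prob_β(b₁, b₂, b₁₂) = 1 - Φ_{ρ(b₁,b₂,b₁₂)}(Φ⁻¹((1+βb₁)/2), Φ⁻¹((1+βb₂)/2)) and ρ(b₁,b₂,b₁₂) = (b₁₂ - b₁b₂)/√((1-b₁²)(1-b₂²)). Then for every β ∈ [-1, 1] and every b₁, b₂ ∈ (-1, 1), b₁₂ with ρ(b₁,b₂,b₁₂) ∈ (-1, 1), one has f_β(b₁, b₂, b₁₂) = f_β(-b₁, -b₂, b₁₂). -/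

import Mathlib

noncomputable def phi (x : ℝ) : ℝ := (1 / Real.sqrt (2 * Real.pi)) * Real.exp (-x ^ 2 / 2)

noncomputable def Phi (x : ℝ) : ℝ := ∫ t in Set.Iic x, phi t

noncomputable def phiRho (ρ x y : ℝ) : ℝ :=
  (1 / (2 * Real.pi * Real.sqrt (1 - ρ ^ 2))) *
    Real.exp (-(x ^ 2 - 2 * ρ * x * y + y ^ 2) / (2 * (1 - ρ ^ 2)))

noncomputable def PhiRho (ρ x y : ℝ) : ℝ :=
  ∫ s in Set.Iic x, ∫ t in Set.Iic y, phiRho ρ s t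

noncomputable def PhiInv : ℝ → ℝ := Function.invFun Phi

noncomputable def rho2 (b₁ b₂ b₁₂ : ℝ) : ℝ :=
  (b₁₂ - b₁ * b₂) / Real.sqrt ((1 - b₁ ^ 2) * (1 - b₂ ^ 2))

noncomputable def Prob6 (β b₁ b₂ b₁₂ : ℝ) : ℝ :=
  1 - PhiRho (rho2 b₁ b₂ b₁₂) (PhiInv ((1 + β * b₁) / 2)) (PhiInv ((1 + β * b₂) / 2))

noncomputable def fBeta (β b₁ b₂ b₁₂ : ℝ) : ℝ :=
  Prob6 β b₁ b₂ b₁₂ - β * (3 - b₁ - b₂ - b₁₂) / 4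

/-!
If `(X, Y)` is a standard normal pair with correlation `ρ`, then `(-X, -Y)` has the same density,
so `Φ_ρ(-x, -y) = P(X > x, Y > y)` and inclusion–exclusion gives
`Φ_ρ(x, y) - Φ_ρ(-x, -y) = Φ(x) + Φ(y) - 1`. Negating `b₁, b₂` leaves `ρ` unchanged and replaces
each `Φ⁻¹((1 + β bᵢ) / 2)` by its negative, since `Φ(-x) = 1 - Φ(x)`. Hence `Prob_β` changes by
`-β (b₁ + b₂) / 2`, which is exactly the change of the SDP term `β (3 - b₁ - b₂ - b₁₂) / 4`.
-/

open MeasureTheory Real Set Filter ProbabilityTheory Topology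

theorem setIntegral_prod_sub_setIntegral_compl_prod_compl {α β E : Type*}
    [MeasurableSpace α] [MeasurableSpace β] [NormedAddCommGroup E] [NormedSpace ℝ E]
    {μ : Measure (α × β)} {f : α × β → E} (hf : Integrable f μ)
    {s : Set α} {t : Set β} (hs : MeasurableSet s) (ht : MeasurableSet t) :
    ∫ p in s ×ˢ t, f p ∂μ - ∫ p in sᶜ ×ˢ tᶜ, f p ∂μ =
      ∫ p in s ×ˢ univ, f p ∂μ - ∫ p in univ ×ˢ tᶜ, f p ∂μ := by
  have h_left : s ×ˢ univ = s ×ˢ t ∪ s ×ˢ tᶜ := by rw [← prod_union, union_compl_self]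
  have h_right : univ ×ˢ tᶜ = s ×ˢ tᶜ ∪ sᶜ ×ˢ tᶜ := by rw [← union_prod, union_compl_self]
  rw [h_left, h_right,
    setIntegral_union (disjoint_compl_right.set_prod_right _ _) (hs.prod ht.compl)
      hf.integrableOn hf.integrableOn,
    setIntegral_union (disjoint_compl_right.set_prod_left _ _) (hs.compl.prod ht.compl)
      hf.integrableOn hf.integrableOn]
  abel

lemma phi_eq_gaussianPDFReal : phi = gaussianPDFReal 0 1 := by
  funext x
  simp [phi, gaussianPDFReal, one_div]

lemma integrable_phi : Integrable phi := by
  rw [phi_eq_gaussianPDFReal]; exact integrable_gaussianPDFReal 0 1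

lemma integral_phi : ∫ x, phi x = 1 := by
  rw [phi_eq_gaussianPDFReal]; exact integral_gaussianPDFReal_eq_one 0 one_ne_zero

lemma phi_pos (x : ℝ) : 0 < phi x := by
  rw [phi_eq_gaussianPDFReal]; exact gaussianPDFReal_pos 0 1 x one_ne_zero

lemma phi_neg (x : ℝ) : phi (-x) = phi x := by simp [phi]

lemma setIntegral_Ioi_phi (x : ℝ) : ∫ t in Ioi x, phi t = 1 - Phi x := by
  rw [Phi, ← integral_phi,
    ← intervalIntegral.integral_Iic_add_Ioi integrable_phi.integrableOn integrable_phi.integrableOn]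
  ring

lemma Phi_neg (x : ℝ) : Phi (-x) = 1 - Phi x := by
  rw [← setIntegral_Ioi_phi, Phi, ← integral_comp_neg_Ioi]
  simp only [phi_neg]

lemma strictMono_Phi : StrictMono Phi := fun a b hab => by
  have h := intervalIntegral.integral_Iic_sub_Iic (a := a) (b := b)
    integrable_phi.integrableOn integrable_phi.integrableOn
  have hpos := intervalIntegral.intervalIntegral_pos_of_pos integrable_phi.intervalIntegrable
    phi_pos hab
  rw [← Phi, ← Phi] at h
  linarith

lemma continuous_Phi : Continuous Phi := by
  have h : Phi = fun b => Phi 0 + ∫ x in (0 : ℝ)..b, phi x := by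
    funext b
    rw [Phi, Phi, ← intervalIntegral.integral_Iic_sub_Iic
      integrable_phi.integrableOn integrable_phi.integrableOn]
    ring
  rw [h]
  exact continuous_const.add (integrable_phi.continuous_primitive 0)

lemma tendsto_Phi_atTop : Tendsto Phi atTop (𝓝 1) := by
  rw [← integral_phi]
  exact (aecover_Iic tendsto_id).integral_tendsto_of_countably_generated integrable_phi

lemma tendsto_Phi_atBot : Tendsto Phi atBot (𝓝 0) := by
  have h := (aecover_Ioi tendsto_id).integral_tendsto_of_countably_generated integrable_phi
  simp_rw [setIntegral_Ioi_phi, integral_phi] at h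
  simpa using (tendsto_const_nhds (x := (1 : ℝ))).sub h

lemma mem_range_Phi {p : ℝ} (hp : p ∈ Ioo (0 : ℝ) 1) : p ∈ range Phi :=
  mem_range_of_exists_le_of_exists_ge continuous_Phi
    ((tendsto_Phi_atBot.eventually (eventually_le_nhds hp.1)).exists)
    ((tendsto_Phi_atTop.eventually (eventually_ge_nhds hp.2)).exists)

lemma Phi_PhiInv {p : ℝ} (hp : p ∈ Ioo (0 : ℝ) 1) : Phi (PhiInv p) = p :=
  Function.invFun_eq (mem_range_Phi hp)

lemma PhiInv_one_sub {p : ℝ} (hp : p ∈ Ioo (0 : ℝ) 1) : PhiInv (1 - p) = -PhiInv p := by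
  rw [← Phi_PhiInv hp, ← Phi_neg, PhiInv, Function.leftInverse_invFun strictMono_Phi.injective,
    Function.leftInverse_invFun strictMono_Phi.injective]

section Bivariate

variable {ρ : ℝ}

lemma phiRho_comm (s t : ℝ) : phiRho ρ s t = phiRho ρ t s := by
  unfold phiRho; ring_nf

lemma phiRho_neg_neg (s t : ℝ) : phiRho ρ (-s) (-t) = phiRho ρ s t := by
  unfold phiRho; ring_nf

lemma phiRho_nonneg (s t : ℝ) : 0 ≤ phiRho ρ s t := by
  unfold phiRho; positivity

lemma continuous_phiRho : Continuous fun p : ℝ × ℝ => phiRho ρ p.1 p.2 := by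
  unfold phiRho; fun_prop

/-- Given `s`, the conditional law of the second coordinate is `𝒩(ρ s, 1 - ρ²)`. -/
lemma phiRho_eq_phi_mul_gaussianPDFReal (hρ : ρ ^ 2 < 1) (s t : ℝ) :
    phiRho ρ s t = phi s * gaussianPDFReal (ρ * s) (1 - ρ ^ 2).toNNReal t := by
  have hv : (0 : ℝ) < 1 - ρ ^ 2 := by linarith
  have h2π : (0 : ℝ) < 2 * π := by positivity
  have hexp : -(s ^ 2 - 2 * ρ * s * t + t ^ 2) / (2 * (1 - ρ ^ 2)) =
      -s ^ 2 / 2 + -(t - ρ * s) ^ 2 / (2 * (1 - ρ ^ 2)) := by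
    field_simp
    ring
  have hsqrt : √(2 * π) * √(2 * π * (1 - ρ ^ 2)) = 2 * π * √(1 - ρ ^ 2) := by
    rw [sqrt_mul h2π.le, ← mul_assoc, mul_self_sqrt h2π.le]
  rw [phiRho, phi, gaussianPDFReal, Real.coe_toNNReal _ hv.le, hexp, exp_add, ← hsqrt]
  field_simp

lemma integrable_phiRho_right (hρ : ρ ^ 2 < 1) (s : ℝ) : Integrable (phiRho ρ s) := by
  simp_rw [funext (phiRho_eq_phi_mul_gaussianPDFReal hρ s)]
  exact (integrable_gaussianPDFReal _ _).const_mul _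

lemma integral_phiRho_right (hρ : ρ ^ 2 < 1) (s : ℝ) : ∫ t, phiRho ρ s t = phi s := by
  have hv : (1 - ρ ^ 2).toNNReal ≠ 0 := by simpa using hρ
  simp_rw [phiRho_eq_phi_mul_gaussianPDFReal hρ s, integral_const_mul,
    integral_gaussianPDFReal_eq_one _ hv, mul_one]

lemma integrable_phiRho (hρ : ρ ^ 2 < 1) :
    Integrable (fun p : ℝ × ℝ => phiRho ρ p.1 p.2) (volume.prod volume) := by
  refine (integrable_prod_iff continuous_phiRho.aestronglyMeasurable).2
    ⟨ae_of_all _ (integrable_phiRho_right hρ), ?_⟩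
  simp_rw [Real.norm_of_nonneg (phiRho_nonneg _ _), integral_phiRho_right hρ]
  exact integrable_phi

lemma setIntegral_prod_univ_phiRho (hρ : ρ ^ 2 < 1) (s : Set ℝ) :
    ∫ p in s ×ˢ univ, phiRho ρ p.1 p.2 ∂volume.prod volume = ∫ x in s, phi x := by
  rw [setIntegral_prod _ (integrable_phiRho hρ).integrableOn]
  simp only [Measure.restrict_univ, integral_phiRho_right hρ]

lemma setIntegral_univ_prod_phiRho (hρ : ρ ^ 2 < 1) (t : Set ℝ) :
    ∫ p in univ ×ˢ t, phiRho ρ p.1 p.2 ∂volume.prod volume = ∫ y in t, phi y := by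
  rw [← setIntegral_prod_swap]
  simp only [Prod.fst_swap, Prod.snd_swap, phiRho_comm (ρ := ρ) _ (Prod.fst _)]
  exact setIntegral_prod_univ_phiRho hρ t

lemma PhiRho_eq_setIntegral (hρ : ρ ^ 2 < 1) (x y : ℝ) :
    PhiRho ρ x y = ∫ p in Iic x ×ˢ Iic y, phiRho ρ p.1 p.2 ∂volume.prod volume :=
  (setIntegral_prod _ (integrable_phiRho hρ).integrableOn).symm

lemma PhiRho_neg_neg_eq_setIntegral (hρ : ρ ^ 2 < 1) (x y : ℝ) :
    PhiRho ρ (-x) (-y) = ∫ p in Ioi x ×ˢ Ioi y, phiRho ρ p.1 p.2 ∂volume.prod volume := by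
  rw [setIntegral_prod _ (integrable_phiRho hρ).integrableOn, PhiRho,
    ← integral_comp_neg_Ioi]
  congr 1 with s
  rw [← integral_comp_neg_Ioi]
  simp only [phiRho_neg_neg]

theorem PhiRho_sub_PhiRho_neg_neg (hρ : ρ ^ 2 < 1) (x y : ℝ) :
    PhiRho ρ x y - PhiRho ρ (-x) (-y) = Phi x + Phi y - 1 := by
  rw [PhiRho_eq_setIntegral hρ, PhiRho_neg_neg_eq_setIntegral hρ, ← compl_Iic, ← compl_Iic,
    setIntegral_prod_sub_setIntegral_compl_prod_compl (integrable_phiRho hρ) measurableSet_Iic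
      measurableSet_Iic, setIntegral_prod_univ_phiRho hρ, setIntegral_univ_prod_phiRho hρ,
    compl_Iic, setIntegral_Ioi_phi]
  unfold Phi
  ring

end Bivariate

lemma rho2_neg_neg (b₁ b₂ b₁₂ : ℝ) : rho2 (-b₁) (-b₂) b₁₂ = rho2 b₁ b₂ b₁₂ := by
  simp [rho2]

lemma one_add_mul_div_two_mem_Ioo {β b : ℝ} (hβ : β ∈ Icc (-1 : ℝ) 1) (hb : b ∈ Ioo (-1 : ℝ) 1) :
    (1 + β * b) / 2 ∈ Ioo (0 : ℝ) 1 := by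
  have h : |β * b| < 1 := by
    rw [abs_mul]
    exact mul_lt_one_of_nonneg_of_lt_one_right (abs_le.2 hβ) (abs_nonneg _) (abs_lt.2 hb)
  constructor <;> linarith [abs_lt.1 h]

theorem stmt_6 (β b₁ b₂ b₁₂ : ℝ) (hβ : β ∈ Set.Icc (-1 : ℝ) 1)
    (h1 : b₁ ∈ Set.Ioo (-1 : ℝ) 1) (h2 : b₂ ∈ Set.Ioo (-1 : ℝ) 1)
    (hρ : rho2 b₁ b₂ b₁₂ ∈ Set.Ioo (-1 : ℝ) 1) :
    fBeta β b₁ b₂ b₁₂ = fBeta β (-b₁) (-b₂) b₁₂ := by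
  set p₁ := (1 + β * b₁) / 2
  set p₂ := (1 + β * b₂) / 2
  have hp₁ : p₁ ∈ Ioo (0 : ℝ) 1 := one_add_mul_div_two_mem_Ioo hβ h1
  have hp₂ : p₂ ∈ Ioo (0 : ℝ) 1 := one_add_mul_div_two_mem_Ioo hβ h2
  have hneg₁ : (1 + β * -b₁) / 2 = 1 - p₁ := by ring
  have hneg₂ : (1 + β * -b₂) / 2 = 1 - p₂ := by ring
  have hρ' : rho2 b₁ b₂ b₁₂ ^ 2 < 1 := (sq_lt_one_iff_abs_lt_one _).2 (abs_lt.2 hρ)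
  have key := PhiRho_sub_PhiRho_neg_neg hρ' (PhiInv p₁) (PhiInv p₂)
  rw [Phi_PhiInv hp₁, Phi_PhiInv hp₂] at key
  unfold fBeta Prob6
  rw [rho2_neg_neg, hneg₁, hneg₂, PhiInv_one_sub hp₁, PhiInv_one_sub hp₂]
  linarith
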